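/- arXiv:1309.5668 — 8 statements merged into one kernel-verified Lean document; each statement's English description precedes it below -/
import Mathlib

section
/- Let Σ be a finite alphabet and let b₁, …, b_r ∈ Σⁿ be distinct strings. Then there exists an index i₀ ∈ [r] and a set S ⊆ [n] with |S| ≤ log₂ r such that the restriction of b_{i₀} to the coordinates in S differs from the restriction of b_i to S for every i ≠ i₀. -/
/-!
Halving argument: if a family `T` of at least two strings is given, pick a coordinate `j` on which
two of them differ. Among the strings taking the values `x j` and `y j` at `j`, one of these two
classes holds at most half of `T`; recursing into it and adding `j` to the separating set costs one
coordinate per halving, so some string is isolated from all the others by at most `log₂ |T|`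
coordinates.
-/

namespace Finset

variable {ι α : Type*}

theorem exists_filter_apply_eq_nonempty_and_two_mul_card_le [DecidableEq α]
    {T : Finset (ι → α)} (hT : 1 < T.card) :
    ∃ j v, (T.filter (· j = v)).Nonempty ∧ 2 * (T.filter (· j = v)).card ≤ T.card := by
  classical
  obtain ⟨x, hx, y, hy, hxy⟩ := one_lt_card.mp hT
  obtain ⟨j, hj⟩ := Function.ne_iff.mp hxy
  have hdisj : Disjoint (T.filter (· j = x j)) (T.filter (· j = y j)) :=
    disjoint_filter.mpr fun _ _ hzx hzy => hj (hzx ▸ hzy)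
  have hsum : (T.filter (· j = x j)).card + (T.filter (· j = y j)).card ≤ T.card := by
    rw [← card_union_of_disjoint hdisj]
    exact card_le_card (union_subset (filter_subset _ _) (filter_subset _ _))
  by_cases hle : (T.filter (· j = x j)).card ≤ (T.filter (· j = y j)).card
  · exact ⟨j, x j, ⟨x, mem_filter.mpr ⟨hx, rfl⟩⟩, by omega⟩
  · exact ⟨j, y j, ⟨y, mem_filter.mpr ⟨hy, rfl⟩⟩, by omega⟩

theorem exists_mem_separated_by_two_pow_card_le {T : Finset (ι → α)} (hT : T.Nonempty) :
    ∃ x ∈ T, ∃ S : Finset ι, 2 ^ S.card ≤ T.card ∧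
      ∀ y ∈ T, y ≠ x → ∃ j ∈ S, x j ≠ y j := by
  classical
  induction T using strongInduction with
  | H T ih =>
  rcases (one_le_card.mpr hT).eq_or_lt with hone | htwo
  · obtain ⟨x, rfl⟩ := card_eq_one.mp hone.symm
    exact ⟨x, mem_singleton_self x, ∅, by simp,
      fun y hy hyx => absurd (mem_singleton.mp hy) hyx⟩
  obtain ⟨j, v, hne, hhalf⟩ := exists_filter_apply_eq_nonempty_and_two_mul_card_le htwo
  have hssub : T.filter (· j = v) ⊂ T := (filter_subset _ _).ssubset_of_ne fun h => by
    have := hne.card_pos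
    rw [h] at hhalf this
    omega
  obtain ⟨x, hx, S, hpow, hsep⟩ := ih _ hssub hne
  have hxj : x j = v := (mem_filter.mp hx).2
  refine ⟨x, filter_subset _ _ hx, insert j S, ?_, fun y hy hyx => ?_⟩
  · calc 2 ^ (insert j S).card ≤ 2 ^ (S.card + 1) :=
          Nat.pow_le_pow_right two_pos (card_insert_le _ _)
      _ = 2 * 2 ^ S.card := by ring
      _ ≤ T.card := by omega
  by_cases hyj : x j = y j
  · obtain ⟨k, hk, hxyk⟩ := hsep y (mem_filter.mpr ⟨hy, hyj ▸ hxj⟩) hyx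
    exact ⟨k, mem_insert_of_mem hk, hxyk⟩
  · exact ⟨j, mem_insert_self j S, hyj⟩

end Finset

theorem stmt_0_general {A : Type*} {n r : ℕ} (hr : 0 < r)
    (b : Fin r → (Fin n → A)) (hb : Function.Injective b) :
    ∃ (i₀ : Fin r) (S : Finset (Fin n)),
      (S.card : ℝ) ≤ Real.logb 2 r ∧
      ∀ i : Fin r, i ≠ i₀ → ∃ j ∈ S, b i₀ j ≠ b i j := by
  classical
  have hcard : (Finset.univ.image b).card = r := by
    rw [Finset.card_image_of_injective _ hb, Finset.card_univ, Fintype.card_fin]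
  obtain ⟨x, hx, S, hpow, hsep⟩ :=
    Finset.exists_mem_separated_by_two_pow_card_le (Finset.card_pos.mp (hcard ▸ hr))
  obtain ⟨i₀, -, rfl⟩ := Finset.mem_image.mp hx
  refine ⟨i₀, S, ?_, fun i hi =>
    hsep (b i) (Finset.mem_image_of_mem b (Finset.mem_univ i)) (hb.ne hi)⟩
  rw [hcard] at hpow
  rw [Real.le_logb_iff_rpow_le one_lt_two (by exact_mod_cast hr), Real.rpow_natCast]
  exact_mod_cast hpow

/-- Among distinct strings `b 1, …, b r ∈ Σⁿ` there is an index `i₀`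
and a set `S ⊆ [n]` with `|S| ≤ log₂ r` such that `b i₀` restricted to `S`
differs from `b i` restricted to `S` for every `i ≠ i₀`. -/
theorem stmt_0 {A : Type*} [Fintype A] {n r : ℕ} (hr : 0 < r)
    (b : Fin r → (Fin n → A)) (hb : Function.Injective b) :
    ∃ (i₀ : Fin r) (S : Finset (Fin n)),
      (S.card : ℝ) ≤ Real.logb 2 r ∧
      ∀ i : Fin r, i ≠ i₀ → ∃ j ∈ S, b i₀ j ≠ b i j :=
  stmt_0_general hr b hb
end

section
/- Let F be a field and let f₁,…,f_r ∈ F[x₁,…,x_n] each have total degree at most d, with |F| > d. Then for any α ∈ Fⁿ, the F-linear span of the vectors of Hasse derivatives {∂_{x^a}(f)(α) : a ∈ ℕⁿ} ⊆ F^r equals the F-linear span of the evaluation vectors {f(β) : β ∈ Fⁿ} ⊆ F^r, where f = (f₁,…,f_r). -/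
/-- The Hasse derivative `∂_{x^a}(f)` evaluated at `α`: the coefficient of
`x^a` in the shifted polynomial `f(x + α)`. -/
noncomputable def hasseAt {σ : Type*} {F : Type*} [CommSemiring F]
    (f : MvPolynomial σ F) (a : σ →₀ ℕ) (α : σ → F) : F :=
  MvPolynomial.coeff a
    (MvPolynomial.bind₁ (fun i => MvPolynomial.X i + MvPolynomial.C (α i)) f)

open MvPolynomial Cardinal Submodule

/-!
With `g = f(x + α)`, the Hasse vectors at `α` are the coefficient vectors of `g`, and the
evaluation vectors of `f` are those of `g`. A linear functional `c` on `Fʳ` kills every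
coefficient vector iff `∑ cᵢ gᵢ = 0`, and kills every evaluation vector iff `∑ cᵢ gᵢ` vanishes
on `Fⁿ`. The shift does not raise total degree, so `∑ cᵢ gᵢ` has degree at most `d < |F|` and
the two conditions agree; hence the two spans have the same annihilator.
-/

theorem MvPolynomial.eq_zero_of_eval_eq_zero_of_totalDegree_lt_card {σ R : Type*} [Finite σ]
    [CommRing R] [IsDomain R] {p : MvPolynomial σ R} (hp : (p.totalDegree : Cardinal) < #R)
    (h : ∀ x, eval x p = 0) : p = 0 := by
  obtain ⟨S, hS⟩ := exists_finset_eq_card (α := R) (n := p.totalDegree + 1)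
    (by exact_mod_cast natCast_add_one_le_iff.mpr hp)
  refine eq_zero_of_eval_zero_at_prod_finset p (fun _ => S) (fun i => ?_) (fun x _ => h x)
  exact hS ▸ Nat.lt_succ_of_le (degreeOf_le_totalDegree p i)

theorem MvPolynomial.totalDegree_bind₁_le {σ τ R : Type*} [CommSemiring R]
    {g : σ → MvPolynomial τ R} (hg : ∀ i, (g i).totalDegree ≤ 1) (p : MvPolynomial σ R) :
    (bind₁ g p).totalDegree ≤ p.totalDegree := by
  conv_lhs => rw [p.as_sum, map_sum]
  refine (totalDegree_finsetSum _ _).trans (Finset.sup_le fun m hm => ?_)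
  rw [bind₁_monomial]
  calc (C (coeff m p) * ∏ i ∈ m.support, g i ^ m i).totalDegree
      ≤ ∑ i ∈ m.support, m i := by
        refine (totalDegree_mul _ _).trans ?_
        rw [totalDegree_C, zero_add]
        refine (totalDegree_finsetProd _ _).trans (Finset.sum_le_sum fun i _ => ?_)
        exact (totalDegree_pow _ _).trans (by simpa using Nat.mul_le_mul_left (m i) (hg i))
    _ ≤ p.totalDegree := le_totalDegree hm

theorem MvPolynomial.eval_bind₁_X_add_C {σ R : Type*} [CommSemiring R] (α β : σ → R)
    (p : MvPolynomial σ R) :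
    eval β (bind₁ (fun i => X i + C (α i)) p) = eval (β + α) p := by
  rw [show eval β = eval₂Hom (RingHom.id R) β from rfl, eval₂Hom_bind₁]
  congr 2 with i
  simp

theorem LinearMap.pi_apply_eq_map_sum {ι R M : Type*} [Fintype ι] [DecidableEq ι]
    [CommSemiring R] [AddCommMonoid M] [Module R M]
    (φ : (ι → R) →ₗ[R] R) (L : M →ₗ[R] R) (g : ι → M) :
    φ (fun i => L (g i)) = L (∑ i, φ (fun j => if i = j then 1 else 0) • g i) := by
  rw [φ.pi_apply_eq_sum_univ, map_sum]
  refine Finset.sum_congr rfl fun i _ => ?_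
  rw [map_smul, smul_eq_mul, smul_eq_mul, mul_comm]

theorem Submodule.span_eq_span_of_forall_subset_ker_iff {K V : Type*} [Field K] [AddCommGroup V]
    [Module K V] {s t : Set V}
    (h : ∀ φ : Module.Dual K V, s ⊆ LinearMap.ker φ ↔ t ⊆ LinearMap.ker φ) :
    span K s = span K t := by
  rw [← Subspace.dualAnnihilator_inj, ← SetLike.coe_set_eq, coe_dualAnnihilator_span,
    coe_dualAnnihilator_span]
  exact Set.ext h

theorem MvPolynomial.span_coeff_eq_span_eval {σ ι F : Type*} [Finite σ] [Finite ι] [Field F]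
    {d : ℕ} (hF : (d : Cardinal) < #F) (g : ι → MvPolynomial σ F)
    (hg : ∀ i, (g i).totalDegree ≤ d) :
    span F (Set.range fun a i => coeff a (g i)) = span F (Set.range fun x i => eval x (g i)) := by
  classical
  have := Fintype.ofFinite ι
  refine span_eq_span_of_forall_subset_ker_iff fun φ => ?_
  set p := ∑ i, φ (fun j => if i = j then 1 else 0) • g i
  have hp : p.totalDegree ≤ d := by
    rw [← mem_restrictTotalDegree]
    exact sum_mem fun i _ => smul_mem _ _ ((mem_restrictTotalDegree _ _ _).mpr (hg i))
  have hcoeff (a : σ →₀ ℕ) : φ (fun i => coeff a (g i)) = coeff a p :=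
    φ.pi_apply_eq_map_sum (lcoeff F a) g
  have heval (x : σ → F) : φ (fun i => eval x (g i)) = eval x p :=
    φ.pi_apply_eq_map_sum (aeval x).toLinearMap g
  simp only [Set.range_subset_iff, SetLike.mem_coe, LinearMap.mem_ker, hcoeff, heval]
  refine ⟨fun h x => ?_, fun h a => ?_⟩
  · rw [show p = 0 from ext _ _ fun m => (h m).trans (coeff_zero m).symm, map_zero]
  · rw [eq_zero_of_eval_eq_zero_of_totalDegree_lt_card ((Nat.cast_le.mpr hp).trans_lt hF) h,
      coeff_zero]

/-- For polynomials `f₁,…,f_r` of total degree at most `d` over a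
field with more than `d` elements, the span of all Hasse-derivative vectors at
any point `α` equals the span of all evaluation vectors. -/
theorem stmt_2 {F : Type*} [Field F] {n r d : ℕ}
    (hF : (d : Cardinal) < Cardinal.mk F)
    (f : Fin r → MvPolynomial (Fin n) F)
    (hdeg : ∀ i, (f i).totalDegree ≤ d) (α : Fin n → F) :
    Submodule.span F
        {v : Fin r → F | ∃ a : Fin n →₀ ℕ, v = fun i => hasseAt (f i) a α}
      = Submodule.span F
        {v : Fin r → F | ∃ β : Fin n → F, v = fun i => MvPolynomial.eval β (f i)} := by
  set shift := bind₁ fun j => X j + C (α j)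
  have hshift_deg (i : Fin r) : (shift (f i)).totalDegree ≤ d :=
    (totalDegree_bind₁_le (fun j => (totalDegree_add _ _).trans (by simp)) _).trans (hdeg i)
  have hshift_eval :
      Set.range (fun β i => eval β (shift (f i))) = Set.range fun β i => eval β (f i) := by
    simp only [shift, eval_bind₁_X_add_C]
    exact (Equiv.addRight α).surjective.range_comp fun β i => eval β (f i)
  calc span F {v | ∃ a : Fin n →₀ ℕ, v = fun i => hasseAt (f i) a α}
      = span F (Set.range fun a i => coeff a (shift (f i))) := by
        congr 1; ext v; exact exists_congr fun a => eq_comm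
    _ = span F (Set.range fun β i => eval β (shift (f i))) :=
        span_coeff_eq_span_eval hF _ hshift_deg
    _ = span F {v | ∃ β : Fin n → F, v = fun i => eval β (f i)} := by
        rw [hshift_eval]; congr 1; ext v; exact exists_congr fun β => eq_comm
end

section
/- Let x^{b₁},…,x^{b_r} be distinct monomials in n variables of individual degree < d over a field F. Then there exist a set T ⊆ [n] with |T| ≤ ⌊log₂ r⌋, coefficients c_a ∈ F indexed by exponent vectors a with supp(a) ⊆ T and individual degree < d, and an index i₀ ∈ [r], such that the differential operator Δ = ∑_a c_a ∂_{x^a} satisfies Δ(x^{b_i})(1,…,1) = 1 if i = i₀ and 0 otherwise. -/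
/-!
Split the exponent vectors along a coordinate on which two of them differ and keep the smaller
class; after at most `log₂ r` halvings a set `T` of coordinates isolates one vector `b i₀`.
Since the Pascal matrix `(u.choose t)` has inverse `((-1) ^ (t + v) * t.choose v)`, the operator
`∏_{j ∈ T} ∑_t (-1) ^ (t + b i₀ j) * (t.choose (b i₀ j)) ∂_{x_j^t}`, evaluated at `1`, sends
`x^{b i}` to `1` if `b i` agrees with `b i₀` on `T` and to `0` otherwise.
-/

open Finset

theorem Finset.exists_mem_two_mul_card_fiber_le {β γ : Type*} [DecidableEq γ] {s : Finset β}
    (f : β → γ) {u w : β} (hu : u ∈ s) (hw : w ∈ s) (huw : f u ≠ f w) :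
    ∃ x ∈ s, ∃ y ∈ s, f x ≠ f y ∧ 2 * #{z ∈ s | f z = f x} ≤ #s := by
  have hsum : #{z ∈ s | f z = f u} + #{z ∈ s | f z = f w} ≤ #s := by
    rw [← card_filter_add_card_filter_not (s := s) (fun z => f z = f u)]
    refine add_le_add_right (card_le_card fun z hz => ?_) _
    simp only [mem_filter] at hz ⊢
    exact ⟨hz.1, hz.2 ▸ huw.symm⟩
  rcases le_total #{z ∈ s | f z = f u} #{z ∈ s | f z = f w} with h | h
  · exact ⟨u, hu, w, hw, huw, by omega⟩
  · exact ⟨w, hw, u, hu, huw.symm, by omega⟩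

theorem Finset.exists_separating_coords {ι α : Type*} (s : Finset (ι → α)) (hs : s.Nonempty) :
    ∃ T : Finset ι, ∃ v ∈ s, #T ≤ Nat.log 2 #s ∧ ∀ w ∈ s, (∀ j ∈ T, w j = v j) → w = v := by
  classical
  induction s using Finset.strongInduction with
  | H s ih =>
  by_cases hsub : (s : Set (ι → α)).Subsingleton
  · obtain ⟨v, hv⟩ := hs
    exact ⟨∅, v, hv, by simp, fun w hw _ => hsub hw hv⟩
  obtain ⟨u, hu, w, hw, huw⟩ := Set.not_subsingleton_iff.1 hsub
  obtain ⟨j, hj⟩ := Function.ne_iff.1 huw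
  obtain ⟨x, hx, y, hy, hxy, hcard⟩ := exists_mem_two_mul_card_fiber_le (· j) hu hw hj
  set s' := {z ∈ s | z j = x j}
  have hss' : s' ⊂ s := ssubset_iff_of_subset (filter_subset _ _) |>.2 ⟨y, hy, by simp [hxy.symm]⟩
  obtain ⟨T, v, hv, hT, hsep⟩ := ih s' hss' ⟨x, by simp [s', hx]⟩
  have hlog : Nat.log 2 #s' + 1 ≤ Nat.log 2 #s := by
    rw [← Nat.log_mul_base one_lt_two (card_ne_zero.2 ⟨x, by simp [s', hx]⟩)]
    exact Nat.log_mono_right (by omega)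
  have hvj : v j = x j := (mem_filter.1 hv).2
  refine ⟨insert j T, v, filter_subset _ _ hv, (card_insert_le j T).trans (by omega), ?_⟩
  intro z hz hzv
  exact hsep z (mem_filter.2 ⟨hz, (hzv j (mem_insert_self j T)).trans hvj⟩)
    fun i hi => hzv i (mem_insert_of_mem hi)

theorem Int.sum_range_neg_one_pow_mul_choose_mul_choose {d u : ℕ} (hu : u < d) (v : ℕ) :
    ∑ t ∈ Finset.range d, ((-1 : ℤ) ^ (t + v) * t.choose v * u.choose t)
      = if u = v then 1 else 0 := by
  have hsupp : ∑ t ∈ Finset.range d, ((-1 : ℤ) ^ (t + v) * t.choose v * u.choose t)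
      = ∑ t ∈ Ico v (u + 1), ((-1 : ℤ) ^ (t + v) * t.choose v * u.choose t) := by
    refine (sum_subset (fun t ht => ?_) fun t _ ht => ?_).symm
    · simp only [mem_Ico, Finset.mem_range] at ht ⊢; omega
    · rcases not_and_or.1 (mem_Ico.not.1 ht) with h | h
      · simp [Nat.choose_eq_zero_of_lt (not_le.1 h)]
      · simp [Nat.choose_eq_zero_of_lt (not_lt.1 h : u + 1 ≤ t)]
  have hterm : ∀ s : ℕ, (-1 : ℤ) ^ (v + s + v) * (v + s).choose v * u.choose (v + s)
      = u.choose v * ((-1) ^ s * (u - v).choose s) := by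
    intro s
    have hchoose := Nat.choose_mul (n := u) (Nat.le_add_right v s)
    rw [Nat.add_sub_cancel_left] at hchoose
    have hcast : (u.choose (v + s) : ℤ) * (v + s).choose v = u.choose v * (u - v).choose s := by
      exact_mod_cast hchoose
    rw [show v + s + v = s + 2 * v by ring, pow_add, pow_mul, neg_one_sq, one_pow, mul_one]
    linear_combination (-1 : ℤ) ^ s * hcast
  rw [hsupp, sum_Ico_eq_sum_range]
  simp only [hterm, ← mul_sum]
  rcases lt_or_ge u v with huv | hvu
  · simp [Nat.choose_eq_zero_of_lt huv, huv.ne]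
  · rw [show u + 1 - v = u - v + 1 by omega, Int.alternating_sum_range_choose]
    rcases eq_or_ne u v with rfl | huv
    · simp
    · simp [huv, show u - v ≠ 0 by omega]

theorem Fin.sum_neg_one_pow_mul_choose_mul_choose {R : Type*} [Ring R] {d : ℕ} (u v : Fin d) :
    ∑ t : Fin d, ((-1 : R) ^ (t + v : ℕ) * (t : ℕ).choose v * (u : ℕ).choose t)
      = if u = v then 1 else 0 := by
  rw [Fin.sum_univ_eq_sum_range (fun t => (-1 : R) ^ (t + v : ℕ) * t.choose v * (u : ℕ).choose t)]
  have h := congrArg (Int.cast : ℤ → R) (Int.sum_range_neg_one_pow_mul_choose_mul_choose u.isLt v)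
  push_cast [Fin.val_inj] at h
  exact h

section DualOperator

variable {R ι : Type*} [CommRing R] [DecidableEq ι] {d : ℕ}

def coordCoeff (T : Finset ι) (v : ι → Fin d) (j : ι) (t : Fin d) : R :=
  if j ∈ T then (-1) ^ (t + v j : ℕ) * (t : ℕ).choose (v j) else if (t : ℕ) = 0 then 1 else 0

theorem sum_coordCoeff_mul_choose (T : Finset ι) (v : ι → Fin d) (j : ι) (u : Fin d) :
    ∑ t, coordCoeff T v j t * ((u : ℕ).choose t : R)
      = if j ∈ T then (if u = v j then 1 else 0) else 1 := by
  by_cases hj : j ∈ T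
  · simpa [coordCoeff, hj] using Fin.sum_neg_one_pow_mul_choose_mul_choose (R := R) u (v j)
  · simp only [coordCoeff, hj, if_false]
    rw [Fin.sum_univ_eq_sum_range (fun t => (if t = 0 then (1 : R) else 0) * (u : ℕ).choose t)]
    simp [Fin.pos u]

theorem sum_prod_coordCoeff_mul_prod_choose [Fintype ι] (T : Finset ι) (v w : ι → Fin d) :
    ∑ a : ι → Fin d, (∏ j, coordCoeff T v j (a j)) * ∏ j, ((w j : ℕ).choose (a j) : R)
      = if ∀ j ∈ T, w j = v j then 1 else 0 := by
  simp_rw [← prod_mul_distrib]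
  rw [← Fintype.prod_sum fun j t => coordCoeff T v j t * ((w j : ℕ).choose t : R)]
  simp only [sum_coordCoeff_mul_choose, prod_ite_mem, univ_inter, prod_boole]
  congr

end DualOperator

/-- Given distinct monomials `x^{b₁},…,x^{b_r}` of individual
degree `< d` (exponent vectors `b i : Fin n → Fin d`), there is a set
`T ⊆ [n]` with `|T| ≤ ⌊log₂ r⌋`, coefficients `c_a` supported on exponent
vectors `a` with `supp(a) ⊆ T`, and an index `i₀` such that the differential
operator `Δ = ∑_a c_a ∂_{x^a}` satisfies `Δ(x^{b_i})(1,…,1) = δ_{i,i₀}`.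
Here `∂_{x^a}(x^b)(1,…,1) = ∏_j C(b_j, a_j)`. -/
theorem stmt_7 {F : Type*} [Field F] {n d r : ℕ} (hr : 0 < r)
    (b : Fin r → (Fin n → Fin d)) (hb : Function.Injective b) :
    ∃ (T : Finset (Fin n)) (i₀ : Fin r) (c : (Fin n → Fin d) → F),
      T.card ≤ Nat.log 2 r ∧
      (∀ a : Fin n → Fin d, (∃ j ∉ T, (a j : ℕ) ≠ 0) → c a = 0) ∧
      (∀ i : Fin r,
        ∑ a : Fin n → Fin d, c a * ∏ j, ((b i j : ℕ).choose (a j : ℕ) : F)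
          = if i = i₀ then 1 else 0) := by
  obtain ⟨T, v, hv, hT, hsep⟩ :=
    (univ.image b).exists_separating_coords ⟨b ⟨0, hr⟩, mem_image_of_mem b (mem_univ _)⟩
  obtain ⟨i₀, -, rfl⟩ := mem_image.1 hv
  rw [card_image_of_injective _ hb, card_univ, Fintype.card_fin] at hT
  refine ⟨T, i₀, fun a => ∏ j, coordCoeff T (b i₀) j (a j), hT, ?_, fun i => ?_⟩
  · rintro a ⟨j, hjT, hja⟩
    exact prod_eq_zero (mem_univ j) (by simp [coordCoeff, hjT, hja])
  · have hagree : (∀ j ∈ T, b i j = b i₀ j) ↔ i = i₀ :=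
      ⟨fun h => hb (hsep _ (mem_image_of_mem b (mem_univ i)) h), by rintro rfl _ _; rfl⟩
    rw [sum_prod_coordCoeff_mul_prod_choose]
    simp only [hagree]
end

section
/- Let x^{b₁},…,x^{b_r} be distinct monomials in n variables of individual degree < d over a field F. Then there is a permutation π of [r] and differential operators Δ₁,…,Δ_r such that Δ_i(x^{b_{π(j)}})(1,…,1) = 1 when i = j and = 0 when j < i, and each Δ_i is an F-linear combination of Hasse derivatives ∂_{x^a} with individual degree of a less than d and supp(a) contained in a set of size at most ⌊log₂ i⌋. -/
/-!
Order the monomials so that each `b_i` is separated from all earlier ones by a small set `T_i`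
of coordinates: split the exponent vectors by the value of one coordinate on which two of them
differ, order each part recursively, and list the smaller part last. An element of the second
part needs only the splitting coordinate in addition to its set inside that part, while its
index at least doubles, so `|T_i| ≤ ⌊log₂ i⌋`.

Since the Pascal matrix `(C(x, k))_{x,k<d}` is unitriangular, each coordinate carries a
combination of Hasse derivatives in that variable which, evaluated at `1`, detects the exponent
`b_i l`. Multiplying these over `l ∈ T_i`, and taking `∂⁰` in the other variables, gives `Δ_i`
with `Δ_i(x^w)(1) = [w = b_i on T_i]`: it is `1` at `b_i` and `0` at every earlier `b_j`.
-/

section Separation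

variable {κ ι α : Type*}

def LogSeparated (b : κ → ι → α) (L : List κ) : Prop :=
  ∀ i (hi : i < L.length), ∃ T : Finset ι, T.card ≤ Nat.log 2 (i + 1) ∧
    ∀ j (hj : j < i), ∃ l ∈ T, b L[j] l ≠ b L[i] l

variable {b : κ → ι → α}

theorem LogSeparated.of_length_le_one {L : List κ} (h : L.length ≤ 1) : LogSeparated b L :=
  fun _ _ => ⟨∅, by simp, fun _ _ => by omega⟩

theorem LogSeparated.append {L M : List κ} (hL : LogSeparated b L) (hM : LogSeparated b M)
    (hlen : M.length ≤ L.length) (l₀ : ι) (hsep : ∀ x ∈ L, ∀ y ∈ M, b x l₀ ≠ b y l₀) :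
    LogSeparated b (L ++ M) := by
  classical
  intro i hi
  rw [List.length_append] at hi
  rcases lt_or_ge i L.length with hiL | hiL
  · obtain ⟨T, hTcard, hTsep⟩ := hL i hiL
    refine ⟨T, hTcard, fun j hj => ?_⟩
    simpa [List.getElem_append_left, hiL, hj.trans hiL] using hTsep j hj
  obtain ⟨T, hTcard, hTsep⟩ := hM (i - L.length) (by omega)
  refine ⟨insert l₀ T, ?_, fun j hj => ?_⟩
  · have hlog : Nat.log 2 (i - L.length + 1) + 1 ≤ Nat.log 2 (i + 1) := by
      rw [← Nat.log_mul_base one_lt_two (by omega)]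
      exact Nat.log_mono_right (by omega)
    exact (Finset.card_insert_le _ _).trans (by omega)
  rw [List.getElem_append_right hiL]
  rcases lt_or_ge j L.length with hjL | hjL
  · rw [List.getElem_append_left hjL]
    exact ⟨l₀, Finset.mem_insert_self _ _, hsep _ (List.getElem_mem _) _ (List.getElem_mem _)⟩
  · obtain ⟨l, hl, hne⟩ := hTsep (j - L.length) (by omega)
    rw [List.getElem_append_right hjL]
    exact ⟨l, Finset.mem_insert_of_mem hl, hne⟩

theorem exists_nodup_logSeparated [DecidableEq κ] (hb : Function.Injective b) (S : Finset κ) :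
    ∃ L : List κ, L.Nodup ∧ L.toFinset = S ∧ LogSeparated b L := by
  classical
  induction S using Finset.strongInduction with
  | H S ih =>
  by_cases hS : S.card ≤ 1
  · exact ⟨S.toList, S.nodup_toList, S.toList_toFinset, .of_length_le_one (by simpa using hS)⟩
  obtain ⟨u, hu, v, hv, huv⟩ := Finset.one_lt_card.mp (not_le.mp hS)
  obtain ⟨l, hl⟩ := Function.ne_iff.mp (hb.ne huv)
  obtain ⟨LP, hPnd, hPS, hP⟩ := ih (S.filter fun x => b x l = b u l)
    (Finset.filter_ssubset.mpr ⟨v, hv, hl.symm⟩)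
  obtain ⟨LQ, hQnd, hQS, hQ⟩ := ih (S.filter fun x => b x l ≠ b u l)
    (Finset.filter_ssubset.mpr ⟨u, hu, by simp⟩)
  have hsep : ∀ x ∈ LP, ∀ y ∈ LQ, b x l ≠ b y l := by
    intro x hx y hy
    rw [← List.mem_toFinset, hPS, Finset.mem_filter] at hx
    rw [← List.mem_toFinset, hQS, Finset.mem_filter] at hy
    exact hx.2.trans_ne (Ne.symm hy.2)
  have hdisj : LP.Disjoint LQ := fun x hx hx' => hsep x hx x hx' rfl
  have hunion : LP.toFinset ∪ LQ.toFinset = S := by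
    rw [hPS, hQS, Finset.filter_union_filter_not_eq]
  rcases le_total LP.length LQ.length with hlen | hlen
  · refine ⟨LQ ++ LP, hQnd.append hPnd hdisj.symm, ?_,
      hQ.append hP hlen l fun x hx y hy => (hsep y hy x hx).symm⟩
    rw [List.toFinset_append, Finset.union_comm, hunion]
  · exact ⟨LP ++ LQ, hPnd.append hQnd hdisj, by rw [List.toFinset_append, hunion],
      hP.append hQ hlen l hsep⟩

end Separation

open Finset

theorem exists_sum_choose_mul_eq_ite (F : Type*) [Field F] (d : ℕ) :
    ∃ N : Fin d → Fin d → F, ∀ x y : Fin d,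
      ∑ k : Fin d, ((x : ℕ).choose k : F) * N k y = if x = y then 1 else 0 := by
  let P : Matrix (Fin d) (Fin d) F := .of fun x k => ((x : ℕ).choose k : F)
  have hP : P.IsLowerTriangular := fun x k hxk => by
    have hxk' : (x : ℕ) < k := OrderDual.toDual_lt_toDual.mp hxk
    simp [P, Nat.choose_eq_zero_of_lt hxk']
  have hdet : P.det = 1 := by
    simp [P.det_of_isLowerTriangular hP, P]
  refine ⟨fun k y => P⁻¹ k y, fun x y => ?_⟩
  simpa [Matrix.mul_apply, Matrix.one_apply, P] using
    congrFun₂ (P.mul_nonsing_inv (by simp [hdet])) x y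

theorem exists_hasse_combination_eq_ite (F : Type*) [Field F] {ι : Type*} [Fintype ι]
    [DecidableEq ι] {d : ℕ} (T : Finset ι) (v : ι → Fin d) :
    ∃ c : (ι → Fin d) → F, (∀ a, (∃ j ∉ T, (a j : ℕ) ≠ 0) → c a = 0) ∧
      ∀ w : ι → Fin d, ∑ a, c a * ∏ l, ((w l : ℕ).choose (a l) : F) =
        if ∀ l ∈ T, w l = v l then 1 else 0 := by
  obtain ⟨N, hN⟩ := exists_sum_choose_mul_eq_ite F d
  let e : ι → Fin d → F := fun l k => if l ∈ T then N k (v l) else if (k : ℕ) = 0 then 1 else 0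
  have he : ∀ (w : ι → Fin d) l, ∑ k, e l k * ((w l : ℕ).choose k : F) =
      if l ∈ T then (if w l = v l then 1 else 0) else 1 := by
    intro w l
    by_cases hl : l ∈ T
    · simp only [e, hl, if_true, ← hN (w l) (v l), mul_comm]
    · rw [Fintype.sum_eq_single ⟨0, (w l).pos⟩ fun k hk => by
        simp [e, hl, Fin.ext_iff.not.mp hk]]
      simp [e, hl]
  refine ⟨fun a => ∏ l, e l (a l),
    fun a ⟨j, hj, haj⟩ => prod_eq_zero (mem_univ j) (by simp [e, hj, haj]), fun w => ?_⟩
  simp_rw [← prod_mul_distrib]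
  rw [← Fintype.prod_sum fun l k => e l k * ((w l : ℕ).choose k : F)]
  simp_rw [he, prod_ite_mem, univ_inter, prod_boole]
  congr

/-- Given distinct monomials `x^{b₁},…,x^{b_r}` of individual
degree `< d`, there is a permutation `π` of `[r]` and differential operators
`Δ₁,…,Δ_r` (each `Δ_i = ∑_a c i a · ∂_{x^a}` supported on exponent vectors `a`
with `supp(a)` contained in a set `T i` of size at most `⌊log₂ i⌋`) such that
`Δ_i(x^{b_{π(j)}})(1,…,1) = 1` when `i = j` and `= 0` when `j < i`.
Here `∂_{x^a}(x^b)(1,…,1) = ∏_j C(b_j, a_j)`. -/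
theorem stmt_8 {F : Type*} [Field F] {n d r : ℕ}
    (b : Fin r → (Fin n → Fin d)) (hb : Function.Injective b) :
    ∃ (π : Equiv.Perm (Fin r)) (c : Fin r → (Fin n → Fin d) → F)
      (T : Fin r → Finset (Fin n)),
      (∀ i : Fin r, (T i).card ≤ Nat.log 2 (i.1 + 1)) ∧
      (∀ i : Fin r, ∀ a : Fin n → Fin d,
        (∃ j ∉ T i, (a j : ℕ) ≠ 0) → c i a = 0) ∧
      (∀ i j : Fin r,
        (i = j →
          ∑ a : Fin n → Fin d,
            c i a * ∏ l, ((b (π j) l : ℕ).choose (a l : ℕ) : F) = 1) ∧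
        (j < i →
          ∑ a : Fin n → Fin d,
            c i a * ∏ l, ((b (π j) l : ℕ).choose (a l : ℕ) : F) = 0)) := by
  obtain ⟨L, hnd, hL, hsep⟩ := exists_nodup_logSeparated hb univ
  have hmem : ∀ k, k ∈ L := fun k => by simp [← List.mem_toFinset, hL]
  have hlen : L.length = r := by
    rw [← List.toFinset_card_of_nodup hnd, hL, card_univ, Fintype.card_fin]
  let π : Equiv.Perm (Fin r) := (finCongr hlen.symm).trans (hnd.getEquivOfForallMemList L hmem)
  choose T hTcard hTsep using fun i : Fin r => hsep i (by omega)
  choose c hc hceval using fun i => exists_hasse_combination_eq_ite F (T i) (b (π i))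
  refine ⟨π, c, T, hTcard, hc, fun i j => ⟨fun hij => ?_, fun hji => ?_⟩⟩
  · simp [hceval, hij]
  · obtain ⟨l, hl, hne⟩ := hTsep i j hji
    rw [hceval, if_neg]
    exact fun h => hne (h l hl)
end

section
/- Let T(t) ∈ F[t]^{D×D}, with D = dⁿ indexed by exponent vectors in {0,…,d−1}ⁿ, be defined by T_{a,b} = C(b,a)·t^{b−a} (the transfer matrix of the shift x ↦ x + t), and let T_r(1) be the submatrix of T evaluated at t = (1,…,1) restricted to rows indexed by exponent vectors a with |a|₀ ≤ ⌊log₂ r⌋. Then every r columns of T_r(1) are linearly independent; i.e., T_r(1) is the parity check matrix of a code of distance > r. -/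
/-!
Induction on `r`. Given nonzero coefficients on a set `S` of at most `r` columns, pick a
coordinate `j₀` on which two columns differ: the fiber of `S` over one of their `j₀`-values has
at most `r / 2` elements, so by induction some row `a` with `|a|₀ ≤ log₂ r - 1` sees a nonzero
combination of that fiber. Letting only `a j₀ = t` vary, the combinations over all of `S` arise
from the fiber sums through the unitriangular matrix `(C(e, t))`, so one of them is nonzero, and
`|a|₀` grows by at most one.
-/

open Finset Function

theorem eq_zero_of_sum_mul_triangular {α R : Type*} [LinearOrder α] [Semiring R]
    [NoZeroDivisors R] (K : α → α → R) (hdiag : ∀ t, K t t ≠ 0) (hK : ∀ e t, e < t → K e t = 0)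
    {E : Finset α} {f : α → R} (hf : ∀ t ∈ E, ∑ e ∈ E, f e * K e t = 0) :
    ∀ e ∈ E, f e = 0 := by
  classical
  by_contra! h
  obtain ⟨m, hm, hmax⟩ :=
    (E.filter (f · ≠ 0)).exists_max_image id (by simpa [filter_nonempty_iff])
  rw [mem_filter] at hm
  refine mul_ne_zero hm.2 (hdiag m) ?_
  rw [← hf m hm.1]
  refine (sum_eq_single_of_mem (f := fun e => f e * K e m) m hm.1 fun e he hne => ?_).symm
  rcases hne.lt_or_gt with hlt | hgt
  · rw [hK e m hlt, mul_zero]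
  · have : f e = 0 := by
      by_contra h0
      exact (hmax e (mem_filter.2 ⟨he, h0⟩)).not_gt hgt
    rw [this, zero_mul]

theorem hammingNorm_update_le {ι : Type*} [Fintype ι] [DecidableEq ι] {β : ι → Type*}
    [∀ i, Zero (β i)] [∀ i, DecidableEq (β i)] (x : ∀ i, β i) (i : ι) (v : β i) :
    hammingNorm (update x i v) ≤ hammingNorm x + 1 := by
  refine (card_le_card fun j hj => ?_).trans (card_insert_le i _)
  rcases eq_or_ne j i with rfl | hji
  · exact mem_insert_self _ _
  · simp_all

theorem exists_fiber_card_le_half {κ β : Type*} [DecidableEq β] {S : Finset (κ → β)}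
    (hS : 1 < #S) :
    ∃ j₀ e₀, (S.filter (· j₀ = e₀)).Nonempty ∧ 2 * #(S.filter (· j₀ = e₀)) ≤ #S := by
  classical
  obtain ⟨x, hx, y, hy, hxy⟩ := one_lt_card.1 hS
  obtain ⟨j₀, hj⟩ := ne_iff.1 hxy
  have hdisj : Disjoint (S.filter (· j₀ = x j₀)) (S.filter (· j₀ = y j₀)) :=
    disjoint_filter.2 fun b _ hbx hby => hj (hbx.symm.trans hby)
  have hsum := (card_union_of_disjoint hdisj).symm.trans_le
    (card_le_card (union_subset (filter_subset _ S) (filter_subset _ S)))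
  rcases le_total #(S.filter (· j₀ = x j₀)) #(S.filter (· j₀ = y j₀)) with hle | hle
  · exact ⟨j₀, x j₀, ⟨x, mem_filter.2 ⟨hx, rfl⟩⟩, by omega⟩
  · exact ⟨j₀, y j₀, ⟨y, mem_filter.2 ⟨hy, rfl⟩⟩, by omega⟩

section

variable {R : Type*} [CommRing R] [IsDomain R] {κ : Type*} [Fintype κ] {d : ℕ}

def vecChoose (b a : κ → Fin d) : ℕ := ∏ j, (b j : ℕ).choose (a j)

theorem vecChoose_update [DecidableEq κ] (b a : κ → Fin d) (j₀ : κ) (t : Fin d) :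
    vecChoose b (update a j₀ t) =
      (b j₀ : ℕ).choose t * ∏ j ∈ univ.erase j₀, (b j : ℕ).choose (a j) := by
  rw [vecChoose, ← mul_prod_erase univ _ (mem_univ j₀), update_self]
  congr 1
  exact prod_congr rfl fun j hj => by rw [update_of_ne (ne_of_mem_erase hj)]

theorem exists_sum_vecChoose_update_ne_zero [DecidableEq κ] (S : Finset (κ → Fin d))
    (c : (κ → Fin d) → R) (a : κ → Fin d) (j₀ : κ) (e₀ : Fin d)
    (h : ∑ b ∈ S with b j₀ = e₀, c b * vecChoose b a ≠ 0) :
    ∃ t, ∑ b ∈ S, c b * vecChoose b (update a j₀ t) ≠ 0 := by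
  by_contra! hzero
  set E := S.image (· j₀)
  set P : (κ → Fin d) → R := fun b => c b * ∏ j ∈ univ.erase j₀, ((b j : ℕ).choose (a j) : R)
  set f : Fin d → R := fun e => ∑ b ∈ S with b j₀ = e, P b
  have hfiber : ∀ e t, ∑ b ∈ S with b j₀ = e, c b * vecChoose b (update a j₀ t) =
      f e * (e : ℕ).choose t := by
    intro e t
    rw [sum_mul]
    refine sum_congr rfl fun b hb => ?_
    rw [vecChoose_update, (mem_filter.1 hb).2]
    push_cast [P]
    ring
  have hf : ∀ e ∈ E, f e = 0 := by
    refine eq_zero_of_sum_mul_triangular (fun e t : Fin d => ((e : ℕ).choose t : R))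
      (fun t => by simp) (fun e t het => by simp [Nat.choose_eq_zero_of_lt het]) fun t _ => ?_
    rw [← hzero t, ← sum_fiberwise_of_maps_to fun b hb =>
      mem_image_of_mem (fun b : κ → Fin d => b j₀) hb]
    exact sum_congr rfl fun e _ => (hfiber e t).symm
  obtain ⟨b₀, hb₀, -⟩ := exists_ne_zero_of_sum_ne_zero h
  obtain ⟨hb₀S, rfl⟩ := mem_filter.1 hb₀
  apply h
  rw [← update_eq_self j₀ a, hfiber, hf _ (mem_image_of_mem _ hb₀S), zero_mul]

theorem exists_sum_vecChoose_ne_zero [DecidableEq κ] {r : ℕ} {S : Finset (κ → Fin d)}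
    (hSr : #S ≤ r) (hS : S.Nonempty) {c : (κ → Fin d) → R} (hc : ∀ b ∈ S, c b ≠ 0) :
    ∃ a : κ → Fin d, hammingNorm (fun j => (a j : ℕ)) ≤ Nat.log 2 r ∧
      ∑ b ∈ S, c b * vecChoose b a ≠ 0 := by
  induction r using Nat.strong_induction_on generalizing S with
  | _ r ih =>
  rcases (one_le_card.2 hS).eq_or_lt with hone | htwo
  · obtain ⟨b, rfl⟩ := card_eq_one.1 hone.symm
    refine ⟨fun j => ⟨0, (b j).pos⟩, by simp [hammingNorm], ?_⟩
    simpa [vecChoose] using hc b (mem_singleton_self b)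
  · obtain ⟨j₀, e₀, hne, hhalf⟩ := exists_fiber_card_le_half htwo
    obtain ⟨a, ha, hsum⟩ := ih (r / 2) (by omega) (by omega) hne
      fun b hb => hc b (mem_of_mem_filter b hb)
    obtain ⟨t, ht⟩ := exists_sum_vecChoose_update_ne_zero S c a j₀ e₀ hsum
    refine ⟨update a j₀ t, ?_, ht⟩
    have hlog : 0 < Nat.log 2 r := Nat.log_pos one_lt_two (by omega)
    calc hammingNorm (fun j => (update a j₀ t j : ℕ))
        = hammingNorm (update (fun j => (a j : ℕ)) j₀ t) := by
          congr 1; funext j; exact apply_update (fun _ => Fin.val) a j₀ t j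
      _ ≤ Nat.log 2 (r / 2) + 1 := (hammingNorm_update_le _ _ _).trans (by omega)
      _ = Nat.log 2 r := by rw [Nat.log_div_base]; omega

variable (R) in
def transferColumn (r : ℕ) (b : κ → Fin d) :
    {a : κ → Fin d // #{j | (a j : ℕ) ≠ 0} ≤ Nat.log 2 r} → R :=
  fun a => ∏ j, ((b j : ℕ).choose (a.1 j : ℕ) : R)

theorem linearIndepOn_transferColumn {r : ℕ} (s : Finset (κ → Fin d))
    (hs : #s ≤ r) : LinearIndepOn R (transferColumn R r) (s : Set (κ → Fin d)) := by
  classical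
  rw [linearIndepOn_finset_iff]
  intro g hg
  by_contra! ⟨b₀, hb₀, hne⟩
  obtain ⟨a, ha, hsum⟩ := exists_sum_vecChoose_ne_zero ((card_filter_le s _).trans hs)
    ⟨b₀, mem_filter.2 ⟨hb₀, hne⟩⟩ fun b hb => (mem_filter.1 hb).2
  apply hsum
  rw [sum_filter_of_ne fun b _ hb => left_ne_zero_of_mul hb]
  simpa [transferColumn, vecChoose] using congrFun hg ⟨a, ha⟩

end

/-- The transfer matrix `T_r(1)`, whose rows are indexed by
exponent vectors `a ∈ {0,…,d-1}ⁿ` with support at most `⌊log₂ r⌋`, whose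
columns are indexed by exponent vectors `b ∈ {0,…,d-1}ⁿ`, and whose
`(a,b)`-entry is `C(b,a) = ∏_j C(b_j,a_j)`, has every `r` columns linearly
independent (it is the parity check matrix of a distance `> r` code).  That
is: for any `r` distinct column indices `b 1,…,b r`, the corresponding columns
are linearly independent over `F`. -/
theorem stmt_9 {F : Type*} [Field F] {n d r : ℕ}
    (b : Fin r → (Fin n → Fin d)) (hb : Function.Injective b) :
    LinearIndependent F
      (fun i : Fin r =>
        fun a : {a : Fin n → Fin d //
            (Finset.univ.filter fun j => (a j : ℕ) ≠ 0).card ≤ Nat.log 2 r} =>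
          ∏ j, ((b i j : ℕ).choose (a.1 j : ℕ) : F)) := by
  have hcard : #(univ.image b) ≤ r := card_image_le.trans (card_fin r).le
  have := linearIndepOn_transferColumn (R := F) _ hcard
  rwa [coe_image, coe_univ, Set.image_univ, linearIndepOn_range_iff hb] at this
end

section
/- Let f ∈ F[x₁,…,x_n] with |F| > n, and suppose f is nonzero if and only if f has some monomial x^a with |a|₀ ≤ ℓ and nonzero coefficient. Let G = G^{SV}_{n,ℓ} be the Shpilka–Volkovich generator: for distinct ξ₀,…,ξ_n ∈ F, define G : F^ℓ × F^ℓ → Fⁿ by G(y,z)_k = ∑_{j=1}^{ℓ} L_k(z_j)·y_j where L_k is the Lagrange interpolation polynomial with L_k(ξ_i) = δ_{ik}. Then f ≢ 0 if and only if f∘G ≢ 0 as a polynomial in (y,z). -/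
/-!
Specialize the `z`-variables of `f ∘ G` to nodes and kill part of the `y`-variables. Let `a` be a
monomial of `f` with support `s`, `|s| ≤ ℓ`, and choose an injection `e : s → Fin ℓ`. Putting
`z_{e i} := ξ_{i+1}` makes `L_{k+1}(z_{e i}) = δ_{ik}`, and then sending `y_{e i} ↦ y_i` and the
remaining `y_j` to `0` turns `f ∘ G` into the restriction of `f` to the variables in `s`, which
still contains the monomial `a`.
-/

open MvPolynomial

section KillCompl

variable {R α β : Type*} [CommSemiring R] {f : α → β} (hf : Function.Injective f)

theorem MvPolynomial.killCompl_X [Fintype α] [DecidableEq β] (j : β) :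
    killCompl hf (X j : MvPolynomial β R) = ∑ i, if f i = j then X i else 0 := by
  classical
  by_cases hj : j ∈ Set.range f
  · obtain ⟨i₀, rfl⟩ := hj
    rw [← rename_X f i₀, killCompl_rename_app]
    simp [hf.eq_iff]
  · have hne : ∀ i, f i ≠ j := fun i hi => hj ⟨i, hi⟩
    simp [killCompl, hne]

theorem MvPolynomial.killCompl_ne_zero_of_coeff_ne_zero {p : MvPolynomial β R} {a : β →₀ ℕ}
    (ha : ↑a.support ⊆ Set.range f) (hp : coeff a p ≠ 0) : killCompl hf p ≠ 0 := by
  intro h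
  apply hp
  rw [← a.mapDomain_comapDomain f hf ha, ← coeff_killCompl hf, h, coeff_zero]

end KillCompl

section Generator

variable {R σ ι : Type*} [CommSemiring R] [Fintype ι]

/-- The Shpilka–Volkovich substitution `x_k ↦ ∑_j L_k(z_j) y_j`, with `y_j = X (inl j)` and
`z_j = X (inr j)`. -/
noncomputable def svGenerator (L : σ → Polynomial R) (k : σ) : MvPolynomial (ι ⊕ ι) R :=
  ∑ j, Polynomial.eval₂ C (X (Sum.inr j)) (L k) * X (Sum.inl j)

theorem aeval_svGenerator {A : Type*} [CommSemiring A] [Algebra R A] (L : σ → Polynomial R)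
    (y : ι → A) (z : ι → R) (k : σ) :
    aeval (Sum.elim y (algebraMap R A ∘ z)) (svGenerator L k) = ∑ j, (L k).eval (z j) • y j := by
  simp only [svGenerator, map_sum, map_mul, aeval_X, Sum.elim_inl, Algebra.smul_def]
  congr! 2 with j
  rw [← AlgHom.coe_toRingHom, Polynomial.hom_eval₂, ← algebraMap_eq, AlgHom.comp_algebraMap,
    AlgHom.coe_toRingHom, aeval_X, Sum.elim_inr, Function.comp_apply, Polynomial.eval₂_at_apply]

theorem aeval_bind₁_svGenerator [DecidableEq σ] [DecidableEq ι] {α : Type*} [Fintype α]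
    {c : α → σ} (hc : Function.Injective c) {e : α → ι} (he : Function.Injective e) (L : σ → Polynomial R) (z : ι → R)
    (hz : ∀ i k, (L k).eval (z (e i)) = if c i = k then 1 else 0) (p : MvPolynomial σ R) :
    aeval (Sum.elim (fun j => killCompl he (X j)) (algebraMap R _ ∘ z))
      (bind₁ (svGenerator L) p) = killCompl hc p := by
  rw [aeval_bind₁]
  congr 1
  refine algHom_ext fun k => ?_
  simp only [aeval_X, aeval_svGenerator, killCompl_X, Finset.smul_sum, smul_ite, smul_zero]
  rw [Finset.sum_comm]
  simp only [Finset.sum_ite_eq, Finset.mem_univ, if_true, hz, ite_smul, one_smul, zero_smul]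

end Generator

theorem Lagrange.eval_basis_univ {F ι : Type*} [Field F] [Fintype ι] [DecidableEq ι] {ξ : ι → F}
    (hξ : Function.Injective ξ) (i j : ι) :
    (Lagrange.basis Finset.univ ξ i).eval (ξ j) = if j = i then 1 else 0 := by
  split_ifs with h
  · subst h
    exact Lagrange.eval_basis_self hξ.injOn (Finset.mem_univ _)
  · exact Lagrange.eval_basis_of_ne (Ne.symm h) (Finset.mem_univ _)

/-- If a polynomial `f` over a field `F` (with `n+1` distinct
elements `ξ₀,…,ξ_n`) is nonzero iff it has a nonzero coefficient on some
monomial of support at most `ℓ`, then `f ≢ 0` iff `f ∘ G^{SV}_{n,ℓ} ≢ 0`,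
where the Shpilka–Volkovich generator substitutes
`x_k ↦ ∑_{j=1}^{ℓ} L_k(z_j)·y_j` with `L_k` the Lagrange interpolation
polynomial satisfying `L_k(ξ_i) = δ_{ik}`. -/
theorem stmt_10 {F : Type*} [Field F] {n ℓ : ℕ}
    (ξ : Fin (n + 1) → F) (hξ : Function.Injective ξ)
    (f : MvPolynomial (Fin n) F)
    (hf : f ≠ 0 ↔ ∃ a : Fin n →₀ ℕ,
      a.support.card ≤ ℓ ∧ MvPolynomial.coeff a f ≠ 0) :
    (f ≠ 0 ↔
      MvPolynomial.bind₁
        (fun k : Fin n =>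
          ∑ j : Fin ℓ,
            Polynomial.eval₂ MvPolynomial.C
                (MvPolynomial.X (Sum.inr j) :
                  MvPolynomial (Fin ℓ ⊕ Fin ℓ) F)
                (Lagrange.basis Finset.univ ξ k.succ) *
              MvPolynomial.X (Sum.inl j))
        f ≠ 0) := by
  refine ⟨fun hf0 h => ?_, fun h hf0 => h (by rw [hf0, map_zero])⟩
  change bind₁ (svGenerator fun k : Fin n => Lagrange.basis Finset.univ ξ k.succ) f = 0 at h
  obtain ⟨a, ha, hfa⟩ := hf.mp hf0
  obtain ⟨e⟩ : Nonempty (a.support ↪ Fin ℓ) :=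
    Function.Embedding.nonempty_of_card_le (by rwa [Fintype.card_coe, Fintype.card_fin])
  let z : Fin ℓ → F := Function.extend e (fun i => ξ (i : Fin n).succ) 0
  have hz : ∀ i k, (Lagrange.basis Finset.univ ξ k.succ).eval (z (e i)) =
      if (i : Fin n) = k then 1 else 0 := by
    intro i k
    simp only [z, e.injective.extend_apply, Lagrange.eval_basis_univ hξ, Fin.succ_inj]
  have hc : Function.Injective ((↑) : a.support → Fin n) := Subtype.val_injective
  refine killCompl_ne_zero_of_coeff_ne_zero hc (fun x hx => ⟨⟨x, hx⟩, rfl⟩) hfa ?_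
  rw [← aeval_bind₁_svGenerator hc e.injective _ z hz, h, map_zero]
end

section
/- Let x and y be disjoint sets of variables, F(x) ∈ F[x]^{r×r} and G(y) ∈ F[y]^{r×r} matrices of polynomials. If F is support-ℓ rank concentrated at α (i.e., Span_F{∂_{x^a}(F)(α) : |a|₀ ≤ ℓ} = Span_F{∂_{x^a}(F)(α) : all a}, viewing matrices as vectors in F^{r²}) and G is support-k rank concentrated at β, then the product F(x)·G(y) is support-(ℓ+k) rank concentrated at (α,β). -/
/-!
Shifting by `Sum.elim α β` and taking coefficients both respect the splitting of the variables,
so the Hasse derivative of `f(x) g(y)` at the exponent `(a, b)` is `∂_a f(α) · ∂_b g(β)`.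
Every exponent on `x ⊔ y` is uniquely such a pair, with `|(a, b)|₀ = |a|₀ + |b|₀`, and hence the
derivative matrices of `F · G` are exactly the products of those of `F` and `G`. Since matrix
multiplication is bilinear, the span of these products depends only on the spans of the two
factor sets, and by hypothesis those are already spanned by the low-support derivatives.
-/

open MvPolynomial Finsupp

section Hasse

variable {σ τ R : Type*} [CommSemiring R]

lemma hasseAt_sum {ι : Type*} (s : Finset ι) (f : ι → MvPolynomial σ R) (a : σ →₀ ℕ)
    (α : σ → R) : hasseAt (∑ i ∈ s, f i) a α = ∑ i ∈ s, hasseAt (f i) a α := by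
  simp only [hasseAt, map_sum, coeff_sum]

lemma bind₁_X_add_C_rename (e : σ → τ) (γ : τ → R) (f : MvPolynomial σ R) :
    bind₁ (fun i => X i + C (γ i)) (rename e f)
      = rename e (bind₁ (fun i => X i + C (γ (e i))) f) := by
  rw [bind₁_rename, rename_bind₁]
  congr 2
  funext i
  simp

lemma sumElim_eq_sumElim_iff (a c : σ →₀ ℕ) (b d : τ →₀ ℕ) :
    sumElim a b = sumElim c d ↔ a = c ∧ b = d :=
  (sumFinsuppEquivProdFinsupp.symm.injective.eq_iff (a := (a, b)) (b := (c, d))).trans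
    Prod.ext_iff

lemma coeff_sumElim_rename_inl_mul_rename_inr (f : MvPolynomial σ R) (g : MvPolynomial τ R)
    (a : σ →₀ ℕ) (b : τ →₀ ℕ) :
    coeff (sumElim a b) (rename Sum.inl f * rename Sum.inr g) = coeff a f * coeff b g := by
  classical
  induction f using MvPolynomial.induction_on' with
  | add p q hp hq => simp only [map_add, add_mul, coeff_add, hp, hq]
  | monomial d s =>
    induction g using MvPolynomial.induction_on' with
    | add p q hp hq => simp only [map_add, mul_add, coeff_add, hp, hq]
    | monomial e t =>
      simp only [rename_monomial, monomial_mul, coeff_monomial, ← sumElim_eq_add,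
        sumElim_eq_sumElim_iff, ite_zero_mul_ite_zero]

lemma hasseAt_sumElim_rename_inl_mul_rename_inr (f : MvPolynomial σ R) (g : MvPolynomial τ R)
    (a : σ →₀ ℕ) (b : τ →₀ ℕ) (α : σ → R) (β : τ → R) :
    hasseAt (rename Sum.inl f * rename Sum.inr g) (sumElim a b) (Sum.elim α β)
      = hasseAt f a α * hasseAt g b β := by
  simp only [hasseAt, map_mul, bind₁_X_add_C_rename, Sum.elim_inl, Sum.elim_inr,
    coeff_sumElim_rename_inl_mul_rename_inr]

end Hasse

section RankConcentration

variable {σ τ R : Type*} [CommSemiring R] {l m n : Type*}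

noncomputable def hasseMatrix (M : Matrix m n (MvPolynomial σ R)) (a : σ →₀ ℕ) (α : σ → R) :
    Matrix m n R :=
  Matrix.of fun u v => hasseAt (M u v) a α

def hasseMatrices (M : Matrix m n (MvPolynomial σ R)) (α : σ → R) : Set (Matrix m n R) :=
  {D | ∃ a : σ →₀ ℕ, D = hasseMatrix M a α}

def hasseMatricesSupportLE (M : Matrix m n (MvPolynomial σ R)) (α : σ → R) (ℓ : ℕ) :
    Set (Matrix m n R) :=
  {D | ∃ a : σ →₀ ℕ, a.support.card ≤ ℓ ∧ D = hasseMatrix M a α}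

def IsSupportRankConcentrated (M : Matrix m n (MvPolynomial σ R)) (α : σ → R) (ℓ : ℕ) : Prop :=
  Submodule.span R (hasseMatricesSupportLE M α ℓ) = Submodule.span R (hasseMatrices M α)

variable [Fintype m] (A : Matrix l m (MvPolynomial σ R)) (B : Matrix m n (MvPolynomial τ R))
  (α : σ → R) (β : τ → R)

-- The named implicit arguments fix the factor types before the product is elaborated;
-- otherwise `*` resolves to the `CStarMatrix` multiplication.
lemma hasseMatrix_sumElim_rename_mul (a : σ →₀ ℕ) (b : τ →₀ ℕ) :
    hasseMatrix (A.map (rename (Sum.inl (β := τ))) * B.map (rename (Sum.inr (α := σ))))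
        (sumElim a b) (Sum.elim α β)
      = hasseMatrix A a α * hasseMatrix B b β := by
  ext u v
  simp only [hasseMatrix, Matrix.of_apply]
  rw [Matrix.mul_apply, Matrix.mul_apply, hasseAt_sum]
  simp only [Matrix.map_apply, Matrix.of_apply, hasseAt_sumElim_rename_inl_mul_rename_inr]

lemma hasseMatrices_rename_mul :
    hasseMatrices (A.map (rename (Sum.inl (β := τ))) * B.map (rename (Sum.inr (α := σ))))
        (Sum.elim α β)
      = Set.image2 (· * ·) (hasseMatrices A α) (hasseMatrices B β) := by
  ext D
  constructor
  · rintro ⟨c, rfl⟩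
    rw [← comapDomain_sumElim_comapDomain c, hasseMatrix_sumElim_rename_mul]
    exact Set.mem_image2_of_mem ⟨_, rfl⟩ ⟨_, rfl⟩
  · rintro ⟨_, ⟨a, rfl⟩, _, ⟨b, rfl⟩, rfl⟩
    exact ⟨sumElim a b, (hasseMatrix_sumElim_rename_mul A B α β a b).symm⟩

lemma image2_mul_hasseMatricesSupportLE_subset (ℓ k : ℕ) :
    Set.image2 (· * ·) (hasseMatricesSupportLE A α ℓ) (hasseMatricesSupportLE B β k)
      ⊆ hasseMatricesSupportLE
          (A.map (rename (Sum.inl (β := τ))) * B.map (rename (Sum.inr (α := σ))))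
          (Sum.elim α β) (ℓ + k) := by
  rintro _ ⟨_, ⟨a, ha, rfl⟩, _, ⟨b, hb, rfl⟩, rfl⟩
  refine ⟨sumElim a b, ?_, (hasseMatrix_sumElim_rename_mul A B α β a b).symm⟩
  rw [sumElim_support, Finset.card_disjSum]
  exact add_le_add ha hb

lemma span_image2_mul_eq_of_span_eq {s s' : Set (Matrix l m R)} {t t' : Set (Matrix m n R)}
    (hs : Submodule.span R s = Submodule.span R s')
    (ht : Submodule.span R t = Submodule.span R t') :
    Submodule.span R (Set.image2 (· * ·) s t) = Submodule.span R (Set.image2 (· * ·) s' t') := by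
  have span_image2_mul (s : Set (Matrix l m R)) (t : Set (Matrix m n R)) :
      Submodule.span R (Set.image2 (· * ·) s t)
        = Submodule.map₂ (mulLinearMap R) (Submodule.span R s) (Submodule.span R t) := by
    rw [Submodule.map₂_span_span]
    rfl
  rw [span_image2_mul, span_image2_mul, hs, ht]

theorem IsSupportRankConcentrated.rename_mul {ℓ k : ℕ}
    (hA : IsSupportRankConcentrated A α ℓ) (hB : IsSupportRankConcentrated B β k) :
    IsSupportRankConcentrated
      (A.map (rename (Sum.inl (β := τ))) * B.map (rename (Sum.inr (α := σ))))
      (Sum.elim α β) (ℓ + k) := by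
  refine le_antisymm (Submodule.span_mono fun D ⟨c, _, hD⟩ => ⟨c, hD⟩) ?_
  rw [hasseMatrices_rename_mul, ← span_image2_mul_eq_of_span_eq hA hB]
  exact Submodule.span_mono (image2_mul_hasseMatricesSupportLE_subset A B α β ℓ k)

end RankConcentration

/-- If `F(x)` is support-`ℓ` rank concentrated at `α` and `G(y)`
is support-`k` rank concentrated at `β` (derivatives of the matrices viewed as
vectors in `F^{r²}`), with `x`, `y` disjoint variable sets, then the product
`F(x)·G(y)` is support-`(ℓ+k)` rank concentrated at `(α,β)`. -/
theorem stmt_13 {F : Type*} [Field F] {nx ny r ℓ k : ℕ}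
    (Fm : Matrix (Fin r) (Fin r) (MvPolynomial (Fin nx) F))
    (G : Matrix (Fin r) (Fin r) (MvPolynomial (Fin ny) F))
    (α : Fin nx → F) (β : Fin ny → F)
    (hF : Submodule.span F
        {D : Matrix (Fin r) (Fin r) F | ∃ a : Fin nx →₀ ℕ,
          a.support.card ≤ ℓ ∧ D = Matrix.of fun u v => hasseAt (Fm u v) a α}
      = Submodule.span F
        {D : Matrix (Fin r) (Fin r) F | ∃ a : Fin nx →₀ ℕ,
          D = Matrix.of fun u v => hasseAt (Fm u v) a α})
    (hG : Submodule.span F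
        {D : Matrix (Fin r) (Fin r) F | ∃ b : Fin ny →₀ ℕ,
          b.support.card ≤ k ∧ D = Matrix.of fun u v => hasseAt (G u v) b β}
      = Submodule.span F
        {D : Matrix (Fin r) (Fin r) F | ∃ b : Fin ny →₀ ℕ,
          D = Matrix.of fun u v => hasseAt (G u v) b β}) :
    Submodule.span F
        {D : Matrix (Fin r) (Fin r) F | ∃ a : (Fin nx ⊕ Fin ny) →₀ ℕ,
          a.support.card ≤ ℓ + k ∧
          D = Matrix.of fun u v => hasseAt
            (((Fm.map (MvPolynomial.rename Sum.inl) *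
              G.map (MvPolynomial.rename Sum.inr) :
                Matrix (Fin r) (Fin r)
                  (MvPolynomial (Fin nx ⊕ Fin ny) F))) u v) a (Sum.elim α β)}
      = Submodule.span F
        {D : Matrix (Fin r) (Fin r) F | ∃ a : (Fin nx ⊕ Fin ny) →₀ ℕ,
          D = Matrix.of fun u v => hasseAt
            (((Fm.map (MvPolynomial.rename Sum.inl) *
              G.map (MvPolynomial.rename Sum.inr) :
                Matrix (Fin r) (Fin r)
                  (MvPolynomial (Fin nx ⊕ Fin ny) F))) u v) a (Sum.elim α β)} :=
  IsSupportRankConcentrated.rename_mul Fm G α β hF hG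
end

section
/- Let f = (f₁,…,f_r) ∈ F[x₁,…,x_n]^r be support-ℓ rank concentrated at α ∈ Fⁿ, and let g(x) = ∑_{i=1}^r β_i f_i for some β ∈ F^r. Then g is nonzero if and only if the shifted polynomial h(x) := g(x + α) has a nonzero coefficient on some monomial x^a with |a|₀ ≤ ℓ. -/
namespace MvPolynomial

variable {σ R : Type*} [CommRing R]

theorem bind₁_X_sub_C_bind₁_X_add_C (α : σ → R) (p : MvPolynomial σ R) :
    bind₁ (fun i => X i - C (α i)) (bind₁ (fun i => X i + C (α i)) p) = p := by
  rw [bind₁_bind₁]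
  simp

theorem bind₁_X_add_C_eq_zero_iff (α : σ → R) {p : MvPolynomial σ R} :
    bind₁ (fun i => X i + C (α i)) p = 0 ↔ p = 0 :=
  map_eq_zero_iff _ (Function.LeftInverse.injective (bind₁_X_sub_C_bind₁_X_add_C α))

end MvPolynomial

open MvPolynomial

theorem hasseAt_sum_C_mul {σ ι R : Type*} [CommSemiring R] [Fintype ι]
    (β : ι → R) (f : ι → MvPolynomial σ R) (a : σ →₀ ℕ) (α : σ → R) :
    hasseAt (∑ i, C (β i) * f i) a α = ∑ i, β i * hasseAt (f i) a α := by
  simp [hasseAt, coeff_sum, coeff_C_mul]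

theorem LinearMap.eqOn_zero_of_span_eq {R M N : Type*} [Semiring R] [AddCommMonoid M]
    [AddCommMonoid N] [Module R M] [Module R N] {S T : Set M}
    (hST : Submodule.span R S = Submodule.span R T) (φ : M →ₗ[R] N)
    (hS : ∀ v ∈ S, φ v = 0) : ∀ v ∈ T, φ v = 0 := by
  have hker : Submodule.span R T ≤ LinearMap.ker φ := hST ▸ Submodule.span_le.2 hS
  exact fun v hv => hker (Submodule.subset_span hv)

/-- If `f = (f₁,…,f_r)` is support-`ℓ` rank concentrated at `α`
and `g = ∑ᵢ βᵢ fᵢ`, then `g ≠ 0` iff the shifted polynomial `h(x) = g(x+α)`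
has a nonzero coefficient on some monomial of support at most `ℓ`. -/
theorem stmt_14 {F : Type*} [Field F] {n r ℓ : ℕ}
    (f : Fin r → MvPolynomial (Fin n) F) (α : Fin n → F)
    (hconc : Submodule.span F
        {v : Fin r → F | ∃ a : Fin n →₀ ℕ,
          a.support.card ≤ ℓ ∧ v = fun i => hasseAt (f i) a α}
      = Submodule.span F
        {v : Fin r → F | ∃ a : Fin n →₀ ℕ, v = fun i => hasseAt (f i) a α})
    (β : Fin r → F) (g : MvPolynomial (Fin n) F)
    (hg : g = ∑ i : Fin r, MvPolynomial.C (β i) * f i) :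
    g ≠ 0 ↔ ∃ a : Fin n →₀ ℕ, a.support.card ≤ ℓ ∧
      MvPolynomial.coeff a
        (MvPolynomial.bind₁
          (fun i => MvPolynomial.X i + MvPolynomial.C (α i)) g) ≠ 0 := by
  have hcoeff : ∀ a, coeff a (bind₁ (fun i => X i + C (α i)) g)
      = Fintype.linearCombination F β (fun i => hasseAt (f i) a α) := by
    intro a
    rw [Fintype.linearCombination_apply, ← hasseAt, hg, hasseAt_sum_C_mul]
    simp only [smul_eq_mul, mul_comm]
  constructor
  · contrapose!
    intro hlow
    have hall := LinearMap.eqOn_zero_of_span_eq hconc (Fintype.linearCombination F β)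
      (by rintro _ ⟨a, ha, rfl⟩; rw [← hcoeff]; exact hlow a ha)
    rw [← bind₁_X_add_C_eq_zero_iff α]
    ext a
    rw [hcoeff, coeff_zero]
    exact hall _ ⟨a, rfl⟩
  · rintro ⟨a, -, ha⟩ rfl
    simp at ha
end
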